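/- In the labelled tree R, let w₁ and w₂ be tree vertices such that the label sequence along the path P_{w₁,w₂} is unimodal of the form 0, 1, …, k−1, k, k, k−1, …, 1, 0 for some k > 0 (labels strictly increase from 0 to k, the path contains exactly one consecutive pair, of label k, and then labels strictly decrease back to 0). Then sign_{w₁}(w₂) = −sign_{w₂}(w₁). -/

import Mathlib

open SimpleGraph

/-- The number of consecutive pairs (adjacent pairs of equal labels) along a list of
vertices (the support of a walk). -/
def cpCount {V : Type} (lab : V → ℕ) (l : List V) : ℕ :=
  (l.zip l.tail).countP (fun q => decide (lab q.1 = lab q.2))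

/-- The number of tree vertices (vertices of label `0`) on a list of vertices. -/
def tvCount {V : Type} (lab : V → ℕ) (l : List V) : ℕ :=
  l.countP (fun x => decide (lab x = 0))

/-- `a` and `b` lie in the same connected component of `R − v`:
some walk from `a` to `b` avoids `v`. -/
def SameSide {V : Type} (R : SimpleGraph V) (v a b : V) : Prop :=
  ∃ p : R.Walk a b, v ∉ p.support

section ListLemmas
variable {V : Type} (lab : V → ℕ)

lemma cp_nil : cpCount lab [] = 0 := rfl
lemma cp_single (a : V) : cpCount lab [a] = 0 := rfl

lemma cp_cons_cons (a b : V) (t : List V) :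
    cpCount lab (a :: b :: t) = (if lab a = lab b then 1 else 0) + cpCount lab (b :: t) := by
  simp only [cpCount, List.tail_cons, List.zip_cons_cons, List.countP_cons]
  split <;> simp_all <;> omega

lemma tv_cons (a : V) (t : List V) :
    tvCount lab (a :: t) = (if lab a = 0 then 1 else 0) + tvCount lab t := by
  simp only [tvCount, List.countP_cons]
  split <;> simp_all <;> omega

lemma cp_append (A : List V) (b : V) (B : List V) :
    cpCount lab (A ++ b :: B) = cpCount lab (A ++ [b]) + cpCount lab (b :: B) := by
  induction A with
  | nil => simp [cp_single]
  | cons a A ih =>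
    cases A with
    | nil => simp only [List.nil_append, List.cons_append, cp_cons_cons, cp_single]; omega
    | cons a' A' =>
      simp only [List.cons_append, cp_cons_cons] at *
      omega

lemma cp_reverse (l : List V) : cpCount lab l.reverse = cpCount lab l := by
  induction l with
  | nil => rfl
  | cons a l ih =>
    cases l with
    | nil => rfl
    | cons c l' =>
      have h : (a :: c :: l').reverse = (c :: l').reverse ++ [a] := by simp
      have h2 : (c :: l').reverse = l'.reverse ++ [c] := by simp
      rw [h, h2, List.append_assoc]
      rw [show ([c] ++ [a] : List V) = c :: [a] from rfl]
      rw [cp_append, ← h2, ih]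
      simp only [cp_cons_cons, cp_single]
      have : (if lab c = lab a then 1 else 0) = (if lab a = lab c then 1 else 0) := by
        split <;> split <;> simp_all
      omega

lemma cp_map (l : List V) : cpCount lab l = cpCount id (l.map lab) := by
  induction l with
  | nil => rfl
  | cons a l ih =>
    cases l with
    | nil => rfl
    | cons c l' =>
      simp only [List.map_cons] at *
      rw [cp_cons_cons, cp_cons_cons, ih]
      simp

lemma tv_map (l : List V) : tvCount lab l = tvCount id (l.map lab) := by
  simp [tvCount, List.countP_map]
  rfl

lemma cp_chain : ∀ l : List V, List.Chain' (fun a b => lab a ≠ lab b) l → cpCount lab l = 0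
  | [], _ => rfl
  | [_], _ => rfl
  | (a :: b :: t), h => by
    unfold List.Chain' at h
    rw [List.isChain_cons_cons] at h
    rw [cp_cons_cons, if_neg h.1, cp_chain (b :: t) h.2]

lemma cp_range (n : ℕ) : cpCount id (List.range n) = 0 := by
  cases n with
  | zero => rfl
  | succ n =>
    refine cp_chain id _ ?_
    unfold List.Chain'
    rw [List.isChain_range_succ]
    intro m _
    simp

lemma cp_L (k : ℕ) :
    cpCount id (List.range (k + 1) ++ (List.range (k + 1)).reverse) = 1 := by
  have h1 : List.range (k + 1) = List.range k ++ [k] := by rw [List.range_succ]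
  have h2 : (List.range (k + 1)).reverse = k :: (List.range k).reverse := by
    rw [h1]; simp
  rw [h2, cp_append]
  have h3 : cpCount id (k :: (List.range k).reverse) = 0 := by
    rw [← h2, cp_reverse, cp_range]
  rw [h3]
  conv_lhs => rw [h1, List.append_assoc]
  rw [show ([k] ++ [k] : List ℕ) = k :: [k] from rfl, cp_append, ← h1, cp_range]
  have : cpCount id [k, k] = 1 := by rw [cp_cons_cons, cp_single, if_pos rfl]
  rw [this]

lemma tv_range (k : ℕ) : tvCount id (List.range (k + 1)) = 1 := by
  rw [List.range_succ_eq_map, tv_cons]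
  simp [tvCount, List.countP_map, List.countP_eq_zero]

lemma tv_L (k : ℕ) :
    tvCount id (List.range (k + 1) ++ (List.range (k + 1)).reverse) = 2 := by
  have : ∀ l l' : List ℕ, tvCount id (l ++ l') = tvCount id l + tvCount id l' := by
    intro l l'; simp [tvCount, List.countP_append]
  rw [this]
  have hr : tvCount id (List.range (k + 1)).reverse = tvCount id (List.range (k + 1)) := by
    simp [tvCount]
  rw [hr, tv_range]

end ListLemmas

section WalkLemmas
variable {V : Type} {R : SimpleGraph V} (lab : V → ℕ)

def eSum {a b : V} (p : R.Walk a b) : ℕ :=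
  cpCount lab p.support + tvCount lab p.support

lemma eSum_nil (a : V) : eSum lab (Walk.nil : R.Walk a a) = if lab a = 0 then 1 else 0 := by
  simp only [eSum, Walk.support_nil, cp_single, tvCount, List.countP_cons, List.countP_nil]
  split <;> simp_all

lemma eSum_cons {a x y : V} (h : R.Adj a x) (w : R.Walk x y) :
    eSum lab (Walk.cons h w) =
      (if lab a = lab x then 1 else 0) + (if lab a = 0 then 1 else 0) + eSum lab w := by
  unfold eSum
  rw [Walk.support_cons, tv_cons]
  conv_lhs => rw [w.support_eq_cons]
  rw [cp_cons_cons, ← w.support_eq_cons]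
  omega

lemma eSum_append : ∀ {a b c : V} (p : R.Walk a b) (q : R.Walk b c),
    eSum lab (p.append q) + (if lab b = 0 then 1 else 0) = eSum lab p + eSum lab q
  | _, _, _, Walk.nil, q => by rw [Walk.nil_append, eSum_nil]; omega
  | _, _, _, Walk.cons h p', q => by
    have ih := eSum_append p' q
    rw [Walk.cons_append, eSum_cons, eSum_cons]
    omega

lemma eSum_reverse {a b : V} (p : R.Walk a b) : eSum lab p.reverse = eSum lab p := by
  unfold eSum
  rw [Walk.support_reverse, cp_reverse]
  simp [tvCount]

lemma exists_meet : ∀ {w₁ w₂ : V} (p : R.Walk w₁ w₂) (S : V → Prop), S w₂ →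
    ∃ (m : V) (p₁ : R.Walk w₁ m) (p₂ : R.Walk m w₂),
      p = p₁.append p₂ ∧ S m ∧ ∀ x ∈ p₁.support, S x → x = m
  | _, w₂, Walk.nil, S, hS => ⟨w₂, Walk.nil, Walk.nil, rfl, hS, by simp⟩
  | _, _, @Walk.cons _ _ u v w h p', S, hS => by
    by_cases hw : S u
    · refine ⟨u, Walk.nil, Walk.cons h p', rfl, hw, ?_⟩
      simp
    · obtain ⟨m, p₁, p₂, hp, hm, hmin⟩ := exists_meet p' S hS
      refine ⟨m, Walk.cons h p₁, p₂, by rw [hp, Walk.cons_append], hm, ?_⟩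
      intro x hx hSx
      rw [Walk.support_cons, List.mem_cons] at hx
      rcases hx with rfl | hx
      · exact absurd hSx hw
      · exact hmin x hx hSx

end WalkLemmas

lemma neg_one_pow_pm (n : ℕ) : ((-1 : ℤ)) ^ n = 1 ∨ ((-1 : ℤ)) ^ n = -1 := by
  rcases Nat.even_or_odd n with h | h
  · exact Or.inl h.neg_one_pow
  · exact Or.inr h.neg_one_pow

lemma mem_of_countP_two {V : Type} {l : List V} (hnd : l.Nodup) (P : V → Bool)
    (hc : l.countP P = 2) {a b x : V} (ha : a ∈ l) (hb : b ∈ l) (hab : a ≠ b)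
    (hPa : P a) (hPb : P b) (hx : x ∈ l) (hPx : P x) : x = a ∨ x = b := by
  by_contra hcon
  push_neg at hcon
  have hsub : [a, b, x] ⊆ l.filter P := by
    intro y hy
    simp only [List.mem_cons, List.not_mem_nil, or_false] at hy
    rcases hy with rfl | rfl | rfl <;> rw [List.mem_filter] <;> exact ⟨‹_›, ‹_›⟩
  have hnd3 : ([a, b, x] : List V).Nodup := by
    simp [hab, hcon.1.symm, hcon.2.symm, Ne.symm]
  have hle := (List.subperm_of_subset hnd3 hsub).length_le
  rw [← List.countP_eq_length_filter, hc] at hle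
  simp at hle


/-- In the labelled tree `R`, let `w₁, w₂` be tree vertices such that the label sequence
along `P_{w₁,w₂}` is unimodal of the form `0, 1, …, k−1, k, k, k−1, …, 1, 0` for some
`k > 0` (i.e. the list of labels of the support is `[0, …, k] ++ [k, …, 0]`).  Then
`sign w₁ w₂ = − sign w₂ w₁`.

The sign and spin functions are axiomatised by their defining properties:
`sign r` takes value `+1` on one component of `R − r` and `−1` on the other;
`spin v u = sign v u * (−1)^(cp + tv)` where `cp` is the number of consecutive pairs
on `P_{v,u}` and `tv` the number of tree vertices on `P_{v,u}`; and for a tree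
vertex `v ≠ r`, `sign v u = spin r v` if `u` is on the same side of `v` as `r`,
and `sign v u = −spin r v` otherwise. -/
theorem sign_antisymmetric_along_unimodal_paths
    {V : Type} (R : SimpleGraph V) (lab : V → ℕ) (r : V)
    (htree : R.IsTree)
    (hr : lab r = 0)
    (h0 : ∀ v, lab v = 0 → ∃ a b, a ≠ b ∧ R.neighborSet v = {a, b} ∧
      lab a = 1 ∧ lab b = 1)
    (h1 : ∀ v n, lab v = n + 1 → ∃ a b c, a ≠ b ∧ a ≠ c ∧ b ≠ c ∧
      R.neighborSet v = {a, b, c} ∧ lab a = n ∧ lab b = n + 1 ∧ lab c = n + 2)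
    (sign : V → V → ℤ) (spin : V → V → ℤ)
    (hsignr_val : ∀ u, u ≠ r → sign r u = 1 ∨ sign r u = -1)
    (hsignr_comp : ∀ a b, a ≠ r → b ≠ r → (sign r a = sign r b ↔ SameSide R r a b))
    (hspin : ∀ v u, lab v = 0 → lab u = 0 → u ≠ v →
      ∀ p : R.Walk v u, p.IsPath →
        spin v u = sign v u * (-1) ^ (cpCount lab p.support + tvCount lab p.support))
    (hsignv : ∀ v, lab v = 0 → v ≠ r → ∀ u, u ≠ v →
      (SameSide R v u r → sign v u = spin r v) ∧
      (¬ SameSide R v u r → sign v u = - spin r v)) :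
    ∀ (w₁ w₂ : V), lab w₁ = 0 → lab w₂ = 0 →
      ∀ k : ℕ, 0 < k →
        ∀ p : R.Walk w₁ w₂, p.IsPath →
          p.support.map lab = List.range (k + 1) ++ (List.range (k + 1)).reverse →
          sign w₁ w₂ = - sign w₂ w₁ := by
  intro w₁ w₂ hl1 hl2 k hk p hpath hmap
  classical
  have hcp : cpCount lab p.support = 1 := by rw [cp_map, hmap, cp_L]
  have htv : tvCount lab p.support = 2 := by rw [tv_map, hmap, tv_L]
  have heS : eSum lab p = 3 := by unfold eSum; rw [hcp, htv]
  have hlen : p.support.length = 2 * k + 2 := by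
    have h' := congrArg List.length hmap
    rw [List.length_map] at h'
    simp only [List.length_append, List.length_reverse, List.length_range] at h'
    omega
  have hne : w₁ ≠ w₂ := by
    intro he
    subst he
    have h2 : p = Walk.nil := (Walk.isPath_iff_eq_nil (p := p)).mp hpath
    have h3 : p.support.length = 1 := by rw [h2]; rfl
    omega
  have hmem0 : ∀ x ∈ p.support, lab x = 0 → x = w₁ ∨ x = w₂ := by
    intro x hx hlx
    exact mem_of_countP_two hpath.support_nodup _ htv p.start_mem_support
      p.end_mem_support hne (by simp [hl1]) (by simp [hl2]) hx (by simp [hlx])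
  by_cases hw1r : w₁ = r
  · subst hw1r
    have h2r : w₂ ≠ w₁ := Ne.symm hne
    have hside : SameSide R w₂ w₁ w₁ := ⟨Walk.nil, by simpa [Walk.support_nil] using h2r⟩
    have hs := (hsignv w₂ hl2 h2r w₁ hne).1 hside
    have hsp := hspin w₁ w₂ hr hl2 h2r p hpath
    rw [hcp, htv] at hsp
    rw [hs, hsp]
    ring
  · by_cases hw2r : w₂ = r
    · subst hw2r
      have hside : SameSide R w₁ w₂ w₂ := ⟨Walk.nil, by simpa [Walk.support_nil] using hw1r⟩
      have hs := (hsignv w₁ hl1 hw1r w₂ hne.symm).1 hside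
      have hsp := hspin w₂ w₁ hr hl1 hw1r p.reverse hpath.reverse
      have hrev : cpCount lab p.reverse.support + tvCount lab p.reverse.support = 3 := by
        have h' := eSum_reverse lab p
        unfold eSum at h'
        omega
      rw [hs, hsp, hrev]
      ring
    · -- main case : w₁ ≠ r, w₂ ≠ r
      obtain ⟨q, hq, hquniq⟩ := htree.existsUnique_path r w₂
      obtain ⟨m, p₁, p₂, hpdec, hmq, hmin⟩ := exists_meet p (· ∈ q.support) q.end_mem_support
      have hp1path : p₁.IsPath := by rw [hpdec] at hpath; exact hpath.of_append_left
      have hp2path : p₂.IsPath := by rw [hpdec] at hpath; exact hpath.of_append_right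
      have hd : q.dropUntil m hmq = p₂ :=
        (htree.existsUnique_path m w₂).unique (hq.dropUntil hmq) hp2path
      have hqdec0 : q = (q.takeUntil m hmq).append p₂ := by
        conv_lhs => rw [← q.take_spec hmq]
        rw [hd]
      obtain ⟨s, hsdef⟩ : ∃ s' : R.Walk r m, s' = q.takeUntil m hmq := ⟨_, rfl⟩
      have hspath : s.IsPath := by rw [hsdef]; exact hq.takeUntil hmq
      have hssub : s.support ⊆ q.support := by rw [hsdef]; exact q.support_takeUntil_subset hmq
      have hqdec : q = s.append p₂ := by rw [hsdef]; exact hqdec0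
      have hqsupp : q.support = s.support ++ p₂.support.tail := by
        conv_lhs => rw [hqdec]
        rw [Walk.support_append]
      have hpsupp : p.support = p₁.support ++ p₂.support.tail := by
        rw [hpdec, Walk.support_append]
      -- the tail of p₁.reverse.support
      have hrevsupp : p₁.reverse.support = m :: p₁.reverse.support.tail :=
        p₁.reverse.support_eq_cons
      have htails : ∀ x ∈ p₁.reverse.support.tail, x ∈ p₁.support ∧ x ≠ m := by
        intro x hx
        have hnd : p₁.reverse.support.Nodup := hp1path.reverse.support_nodup
        rw [hrevsupp, List.nodup_cons] at hnd
        refine ⟨?_, fun he => hnd.1 (he ▸ hx)⟩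
        have hx' : x ∈ p₁.reverse.support := by
          rw [hrevsupp]; exact List.mem_cons_of_mem m hx
        rwa [Walk.support_reverse, List.mem_reverse] at hx'
      -- q₁ := s.append p₁.reverse is a path from r to w₁
      have hq₁path : (s.append p₁.reverse).IsPath := by
        rw [Walk.isPath_def, Walk.support_append, List.nodup_append]
        refine ⟨hspath.support_nodup, ?_, ?_⟩
        · have hnd : p₁.reverse.support.Nodup := hp1path.reverse.support_nodup
          rw [hrevsupp, List.nodup_cons] at hnd
          exact hnd.2
        · intro x hxs y hxt hxy
          subst hxy
          obtain ⟨hxp1, hxm⟩ := htails x hxt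
          exact hxm (hmin x hxp1 (hssub hxs))
      -- disjointness facts
      have hdisj1 : ∀ x, x ∈ s.support → x ∈ p₁.reverse.support.tail → False := by
        have h' := hq₁path.support_nodup
        rw [Walk.support_append, List.nodup_append] at h'
        exact fun x hx hy => h'.2.2 x hx x hy rfl
      have hdisjp : ∀ x, x ∈ p₁.support → x ∈ p₂.support.tail → False := by
        have h' := hpath.support_nodup
        rw [hpsupp, List.nodup_append] at h'
        exact fun x hx hy => h'.2.2 x hx x hy rfl
      have hdisjq : ∀ x, x ∈ s.support → x ∈ p₂.support.tail → False := by
        have h' := hq.support_nodup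
        rw [hqsupp, List.nodup_append] at h'
        exact fun x hx hy => h'.2.2 x hx x hy rfl
      -- membership helpers
      have hw1rev : m ≠ w₁ → w₁ ∈ p₁.reverse.support.tail := by
        intro hm
        have h' : w₁ ∈ p₁.reverse.support := Walk.end_mem_support _
        rw [hrevsupp, List.mem_cons] at h'
        rcases h' with he | h'
        · exact absurd he.symm hm
        · exact h'
      have hw2tail : m ≠ w₂ → w₂ ∈ p₂.support.tail := by
        intro hm
        have h' : w₂ ∈ p₂.support := Walk.end_mem_support _
        rw [p₂.support_eq_cons, List.mem_cons] at h'
        rcases h' with he | h'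
        · exact absurd he.symm hm
        · exact h'
      -- C1 : m ≠ w₁ → w₁ ∉ q.support
      have C1 : m ≠ w₁ → w₁ ∉ q.support := by
        intro hm hmem
        rw [hqsupp, List.mem_append] at hmem
        rcases hmem with hx | hx
        · exact hdisj1 w₁ hx (hw1rev hm)
        · exact hdisjp w₁ p₁.start_mem_support hx
      -- C3 : m ≠ w₂ → w₂ ∉ (s.append p₁.reverse).support
      have C3 : m ≠ w₂ → w₂ ∉ (s.append p₁.reverse).support := by
        intro hm hmem
        rw [Walk.support_append, List.mem_append] at hmem
        rcases hmem with hx | hx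
        · exact hdisjq w₂ hx (hw2tail hm)
        · exact hdisjp w₂ (htails w₂ hx).1 (hw2tail hm)
      -- SameSide characterizations
      have hSS1 : SameSide R w₁ w₂ r ↔ m ≠ w₁ := by
        constructor
        · rintro ⟨W, hW⟩ rfl
          have heq : (W.toPath : R.Walk w₂ r) = q.reverse :=
            (htree.existsUnique_path w₂ r).unique W.toPath.2 hq.reverse
          apply hW
          apply W.support_toPath_subset
          rw [heq, Walk.support_reverse, List.mem_reverse]
          exact hmq
        · intro hm
          exact ⟨q.reverse, by rw [Walk.support_reverse, List.mem_reverse]; exact C1 hm⟩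
      have hSS2 : SameSide R w₂ w₁ r ↔ m ≠ w₂ := by
        constructor
        · rintro ⟨W, hW⟩ rfl
          have heq : (W.toPath : R.Walk w₁ r) = (s.append p₁.reverse).reverse :=
            (htree.existsUnique_path w₁ r).unique W.toPath.2 hq₁path.reverse
          apply hW
          apply W.support_toPath_subset
          rw [heq, Walk.support_reverse, List.mem_reverse, Walk.support_append,
            List.mem_append]
          exact Or.inl s.end_mem_support
        · intro hm
          exact ⟨(s.append p₁.reverse).reverse,
            by rw [Walk.support_reverse, List.mem_reverse]; exact C3 hm⟩
      -- spin equations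
      have hsp1 : spin r w₁ = sign r w₁ * (-1) ^ (eSum lab (s.append p₁.reverse)) :=
        hspin r w₁ hr hl1 hw1r _ hq₁path
      have hsp2 : spin r w₂ = sign r w₂ * (-1) ^ (eSum lab q) :=
        hspin r w₂ hr hl2 hw2r q hq
      have hsreq : sign r w₁ = sign r w₂ := by
        refine (hsignr_comp w₁ w₂ hw1r hw2r).mpr ⟨p, fun hrmem => ?_⟩
        rcases hmem0 r hrmem hr with he | he
        · exact hw1r he.symm
        · exact hw2r he.symm
      -- parity bookkeeping
      have E1 : eSum lab (s.append p₁.reverse) + (if lab m = 0 then 1 else 0) =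
          eSum lab s + eSum lab p₁ := by
        have h' := eSum_append lab s p₁.reverse
        rwa [eSum_reverse] at h'
      have E2 : eSum lab q + (if lab m = 0 then 1 else 0) =
          eSum lab s + eSum lab p₂ := by
        have h' := eSum_append lab s p₂
        rwa [← hqdec] at h'
      have E3 : eSum lab p + (if lab m = 0 then 1 else 0) =
          eSum lab p₁ + eSum lab p₂ := by
        have h' := eSum_append lab p₁ p₂
        rwa [← hpdec] at h'
      have hsum : eSum lab (s.append p₁.reverse) + eSum lab q + (if lab m = 0 then 1 else 0) =
          2 * eSum lab s + 3 := by omega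
      have hpow : (-1 : ℤ) ^ (eSum lab (s.append p₁.reverse) + eSum lab q +
          (if lab m = 0 then 1 else 0)) = -1 := by
        rw [hsum]
        exact Odd.neg_one_pow ⟨eSum lab s + 1, by ring⟩
      rw [pow_add, pow_add] at hpow
      have hm_in_p : m ∈ p.support := by
        rw [hpsupp]; exact List.mem_append_left _ p₁.end_mem_support
      -- the two ±1 values
      have hX : (-1 : ℤ) ^ (eSum lab (s.append p₁.reverse)) = 1 ∨
          (-1 : ℤ) ^ (eSum lab (s.append p₁.reverse)) = -1 := neg_one_pow_pm _
      have hY : (-1 : ℤ) ^ (eSum lab q) = 1 ∨ (-1 : ℤ) ^ (eSum lab q) = -1 :=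
        neg_one_pow_pm _
      by_cases hmw1 : m = w₁
      · -- lab m = 0, ¬SameSide R w₁ w₂ r, SameSide R w₂ w₁ r
        have hlm : lab m = 0 := hmw1 ▸ hl1
        rw [if_pos hlm, pow_one] at hpow
        have hXY : (-1 : ℤ) ^ (eSum lab (s.append p₁.reverse)) * (-1 : ℤ) ^ (eSum lab q) = 1 := by
          rw [mul_neg_one] at hpow
          exact neg_inj.mp hpow
        have hYY : (-1 : ℤ) ^ (eSum lab q) * (-1 : ℤ) ^ (eSum lab q) = 1 := by
          rcases hY with h' | h' <;> rw [h'] <;> norm_num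
        have hXeqY : (-1 : ℤ) ^ (eSum lab (s.append p₁.reverse)) = (-1 : ℤ) ^ (eSum lab q) := by
          calc (-1 : ℤ) ^ (eSum lab (s.append p₁.reverse))
              = (-1 : ℤ) ^ (eSum lab (s.append p₁.reverse)) * ((-1 : ℤ) ^ (eSum lab q) * (-1 : ℤ) ^ (eSum lab q)) := by rw [hYY, mul_one]
            _ = ((-1 : ℤ) ^ (eSum lab (s.append p₁.reverse)) * (-1 : ℤ) ^ (eSum lab q)) * (-1 : ℤ) ^ (eSum lab q) := by ring
            _ = (-1 : ℤ) ^ (eSum lab q) := by rw [hXY, one_mul]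
        have hs1 : sign w₁ w₂ = - spin r w₁ :=
          (hsignv w₁ hl1 hw1r w₂ hne.symm).2 (fun hss => (hSS1.mp hss) hmw1)
        have hs2 : sign w₂ w₁ = spin r w₂ :=
          (hsignv w₂ hl2 hw2r w₁ hne).1 (hSS2.mpr (fun he => hne (hmw1.symm.trans he)))
        rw [hs1, hs2, hsp1, hsp2, hsreq, hXeqY]
      · by_cases hmw2 : m = w₂
        · have hlm : lab m = 0 := hmw2 ▸ hl2
          rw [if_pos hlm, pow_one] at hpow
          have hXY : (-1 : ℤ) ^ (eSum lab (s.append p₁.reverse)) * (-1 : ℤ) ^ (eSum lab q) = 1 := by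
            rw [mul_neg_one] at hpow
            exact neg_inj.mp hpow
          have hYY : (-1 : ℤ) ^ (eSum lab q) * (-1 : ℤ) ^ (eSum lab q) = 1 := by
            rcases hY with h' | h' <;> rw [h'] <;> norm_num
          have hXeqY : (-1 : ℤ) ^ (eSum lab (s.append p₁.reverse)) = (-1 : ℤ) ^ (eSum lab q) := by
            calc (-1 : ℤ) ^ (eSum lab (s.append p₁.reverse))
                = (-1 : ℤ) ^ (eSum lab (s.append p₁.reverse)) * ((-1 : ℤ) ^ (eSum lab q) * (-1 : ℤ) ^ (eSum lab q)) := by rw [hYY, mul_one]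
              _ = ((-1 : ℤ) ^ (eSum lab (s.append p₁.reverse)) * (-1 : ℤ) ^ (eSum lab q)) * (-1 : ℤ) ^ (eSum lab q) := by ring
              _ = (-1 : ℤ) ^ (eSum lab q) := by rw [hXY, one_mul]
          have hs1 : sign w₁ w₂ = spin r w₁ :=
            (hsignv w₁ hl1 hw1r w₂ hne.symm).1 (hSS1.mpr hmw1)
          have hs2 : sign w₂ w₁ = - spin r w₂ :=
            (hsignv w₂ hl2 hw2r w₁ hne).2 (fun hss => (hSS2.mp hss) hmw2)
          rw [hs1, hs2, hsp1, hsp2, hsreq, hXeqY]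
          ring
        · -- m interior : lab m ≠ 0
          have hlm : ¬ lab m = 0 := by
            intro h'
            rcases hmem0 m hm_in_p h' with he | he
            · exact hmw1 he
            · exact hmw2 he
          rw [if_neg hlm, pow_zero, mul_one] at hpow
          have hs1 : sign w₁ w₂ = spin r w₁ :=
            (hsignv w₁ hl1 hw1r w₂ hne.symm).1 (hSS1.mpr hmw1)
          have hs2 : sign w₂ w₁ = spin r w₂ :=
            (hsignv w₂ hl2 hw2r w₁ hne).1 (hSS2.mpr hmw2)
          have hYY : (-1 : ℤ) ^ (eSum lab q) * (-1 : ℤ) ^ (eSum lab q) = 1 := by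
            rcases hY with h' | h' <;> rw [h'] <;> norm_num
          have hXnegY : (-1 : ℤ) ^ (eSum lab (s.append p₁.reverse)) = -(-1 : ℤ) ^ (eSum lab q) := by
            calc (-1 : ℤ) ^ (eSum lab (s.append p₁.reverse))
                = (-1 : ℤ) ^ (eSum lab (s.append p₁.reverse)) * ((-1 : ℤ) ^ (eSum lab q) * (-1 : ℤ) ^ (eSum lab q)) := by rw [hYY, mul_one]
              _ = ((-1 : ℤ) ^ (eSum lab (s.append p₁.reverse)) * (-1 : ℤ) ^ (eSum lab q)) * (-1 : ℤ) ^ (eSum lab q) := by ring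
              _ = -(-1 : ℤ) ^ (eSum lab q) := by rw [hpow]; ring
          rw [hs1, hs2, hsp1, hsp2, hsreq, hXnegY]
          ring
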